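/- The map φ_m(z) := ℓ_m^{−1}(|z|) z/|z| on ℝ^d \ {0} pushes the measure n^0(dz) = Γ((d+1)/2) π^{−(d+1)/2} |z|^{−(d+1)} dz forward to n^m(dy) = 2(m/(2π))^{(d+1)/2} K_{(d+1)/2}(m|y|) |y|^{−(d+1)/2} dy; that is, n^m = n^0 ∘ φ_m^{−1}. -/

import Mathlib

open Real Set Filter MeasureTheory
open scoped ENNReal NNReal

/-- Modified Bessel function of the second kind, via its integral representation. -/
noncomputable def besselK (ν x : ℝ) : ℝ :=
  ∫ t in Set.Ioi (0:ℝ), Real.exp (-x * Real.cosh t) * Real.cosh (ν * t)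

/-- The function `ℓ_m` of the radial change of variables for the Lévy measures. -/
noncomputable def ellFn (d : ℕ) (m r : ℝ) : ℝ :=
  2 ^ (((d:ℝ)-1)/2) * Real.Gamma (((d:ℝ)+1)/2) /
    (m ^ (((d:ℝ)+1)/2) *
      ∫ u in Set.Ioi r, u ^ (((d:ℝ)-3)/2) * besselK (((d:ℝ)+1)/2) (m * u))

/-- The Lévy measure `n^0` of the Cauchy process. -/
noncomputable def levyMeasureZero (d : ℕ) : Measure (EuclideanSpace ℝ (Fin d)) :=
  volume.withDensity (fun z =>
    ENNReal.ofReal (Real.Gamma (((d:ℝ)+1)/2) / (π ^ (((d:ℝ)+1)/2) * ‖z‖ ^ ((d:ℝ)+1))))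

/-- The Lévy measure `n^m` of the relativistic `m`-stable process. -/
noncomputable def levyMeasureM (d : ℕ) (m : ℝ) : Measure (EuclideanSpace ℝ (Fin d)) :=
  volume.withDensity (fun y =>
    ENNReal.ofReal (2 * (m / (2 * π)) ^ (((d:ℝ)+1)/2) *
      besselK (((d:ℝ)+1)/2) (m * ‖y‖) / ‖y‖ ^ (((d:ℝ)+1)/2)))

section bessel
variable {ν x : ℝ}

lemma besselK_cont (ν x : ℝ) : Continuous (fun t => Real.exp (-x * Real.cosh t) * Real.cosh (ν * t)) := by
  fun_prop

lemma sq_div_le_cosh {t : ℝ} (ht : 0 ≤ t) : t^2/8 ≤ Real.cosh t := by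
  have h1 : 1 + t/2 ≤ Real.exp (t/2) := by linarith [Real.add_one_le_exp (t/2)]
  have h2 : (1 + t/2)^2 ≤ Real.exp (t/2) ^ 2 := by
    apply pow_le_pow_left₀ (by positivity) h1
  rw [← Real.exp_nat_mul] at h2
  have h2' : (1 + t/2)^2 ≤ Real.exp t := by
    convert h2 using 2
    push_cast; ring
  have h3 : t^2/4 ≤ (1+t/2)^2 := by nlinarith
  have h4 : Real.exp t / 2 ≤ Real.cosh t := by
    rw [Real.cosh_eq]
    have := Real.exp_pos (-t)
    linarith
  nlinarith [Real.exp_pos t]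

lemma cosh_le_exp {t : ℝ} (ht : 0 ≤ t) : Real.cosh t ≤ Real.exp t := by
  rw [Real.cosh_eq]
  have h : Real.exp (-t) ≤ Real.exp t := Real.exp_le_exp.2 (by linarith)
  linarith [Real.exp_pos t]

lemma besselK_integrableOn (hν : 0 ≤ ν) (hx : 0 < x) :
    IntegrableOn (fun t => Real.exp (-x * Real.cosh t) * Real.cosh (ν * t)) (Ioi (0:ℝ)) := by
  set T : ℝ := 8 * (ν + 1) / x with hT
  have hT0 : 0 < T := by positivity
  have hsplit : Ioc (0:ℝ) T ∪ Ioi T = Ioi 0 := Ioc_union_Ioi_eq_Ioi hT0.le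
  rw [← hsplit]
  apply IntegrableOn.union
  · exact (besselK_cont ν x).integrableOn_Ioc
  · apply Integrable.mono' ((exp_neg_integrableOn_Ioi T (zero_lt_one)))
    · exact (besselK_cont ν x).aestronglyMeasurable
    · filter_upwards [ae_restrict_mem measurableSet_Ioi] with t ht
      have htT : T < t := ht
      have ht0 : 0 < t := hT0.trans htT
      have hcosh : (ν+1) * t ≤ x * Real.cosh t := by
        have h1 : t^2/8 ≤ Real.cosh t := sq_div_le_cosh ht0.le
        have h2 : 8 * (ν+1) ≤ x * t := by
          rw [hT] at htT
          calc 8*(ν+1) = x * (8*(ν+1)/x) := by field_simp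
          _ ≤ x * t := by nlinarith
        nlinarith [Real.cosh_pos (x := t)]
      have hbd : Real.exp (-x * Real.cosh t) * Real.cosh (ν * t) ≤ Real.exp (-1 * t) := by
        have hc : Real.cosh (ν * t) ≤ Real.exp (ν * t) := cosh_le_exp (by positivity)
        calc Real.exp (-x * Real.cosh t) * Real.cosh (ν * t)
            ≤ Real.exp (-(ν+1)*t) * Real.exp (ν * t) := by
              apply mul_le_mul _ hc (by positivity) (Real.exp_pos _).le
              apply Real.exp_le_exp.2; nlinarith
          _ = Real.exp (-1 * t) := by rw [← Real.exp_add]; ring_nf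
      rw [Real.norm_eq_abs, abs_of_nonneg (by positivity)]
      exact hbd

lemma besselK_pos (hν : 0 ≤ ν) (hx : 0 < x) : 0 < besselK ν x := by
  rw [besselK, setIntegral_pos_iff_support_of_nonneg_ae
    (by filter_upwards with t using by positivity) (besselK_integrableOn hν hx)]
  have hsub : Ioi (0:ℝ) ⊆ Function.support fun t => Real.exp (-x * Real.cosh t) * Real.cosh (ν * t) := by
    intro t _
    exact (by positivity : (0:ℝ) < _).ne'
  rw [inter_eq_right.2 hsub]
  simp

lemma besselK_eq_zero (hν : 1 ≤ ν) (hx : x ≤ 0) : besselK ν x = 0 := by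
  rw [besselK]
  apply integral_undef
  intro hint
  have h1 : IntegrableOn (fun _ : ℝ => (1:ℝ)) (Ioi (0:ℝ)) := by
    apply hint.mono' aestronglyMeasurable_const
    filter_upwards [ae_restrict_mem measurableSet_Ioi] with t ht
    have ht0 : (0:ℝ) < t := ht
    have h2 : (1:ℝ) ≤ Real.exp (-x * Real.cosh t) := by
      rw [← Real.exp_zero]
      apply Real.exp_le_exp.2
      have := Real.cosh_pos (x := t)
      nlinarith
    have h3 : (1:ℝ) ≤ Real.cosh (ν * t) := Real.one_le_cosh _
    rw [norm_one]
    nlinarith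
  rw [integrableOn_const_iff] at h1
  rcases h1 with h | h
  · norm_num at h
  · simp at h

lemma besselK_le (hν : 0 ≤ ν) {y : ℝ} (hy : 0 < y) (hxy : y ≤ x) :
    besselK ν x ≤ Real.exp (-x/2) * besselK ν (y/2) := by
  have hx : 0 < x := hy.trans_le hxy
  rw [besselK, besselK, ← integral_const_mul]
  apply integral_mono_of_nonneg
  · filter_upwards with t; positivity
  · exact ((besselK_integrableOn hν (by positivity)).const_mul _)
  · filter_upwards [ae_restrict_mem measurableSet_Ioi] with t ht
    have ht0 : (0:ℝ) < t := ht
    have hc1 : (1:ℝ) ≤ Real.cosh t := Real.one_le_cosh t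
    have key : Real.exp (-x * Real.cosh t) ≤ Real.exp (-x/2) * Real.exp (-(y/2) * Real.cosh t) := by
      rw [← Real.exp_add]
      apply Real.exp_le_exp.2
      nlinarith
    calc Real.exp (-x * Real.cosh t) * Real.cosh (ν * t)
        ≤ (Real.exp (-x/2) * Real.exp (-(y/2) * Real.cosh t)) * Real.cosh (ν * t) := by
          apply mul_le_mul_of_nonneg_right key (Real.cosh_pos _).le
      _ = Real.exp (-x/2) * (Real.exp (-(y/2) * Real.cosh t) * Real.cosh (ν * t)) := by ring

lemma besselK_continuousOn (hν : 0 ≤ ν) : ContinuousOn (besselK ν) (Ioi (0:ℝ)) := by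
  intro x₀ hx₀
  have hx0 : (0:ℝ) < x₀ := hx₀
  apply ContinuousAt.continuousWithinAt
  apply continuousAt_of_dominated (bound := fun t => Real.exp (-(x₀/2) * Real.cosh t) * Real.cosh (ν * t))
  · filter_upwards with x
    exact (besselK_cont ν x).aestronglyMeasurable
  · filter_upwards [eventually_gt_nhds (by linarith : x₀/2 < x₀)] with x hx
    filter_upwards [ae_restrict_mem measurableSet_Ioi] with t _
    rw [Real.norm_eq_abs, abs_of_nonneg (by positivity)]
    have hc1 : (1:ℝ) ≤ Real.cosh t := Real.one_le_cosh t
    apply mul_le_mul_of_nonneg_right _ (Real.cosh_pos _).le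
    apply Real.exp_le_exp.2
    nlinarith
  · exact besselK_integrableOn hν (by positivity)
  · filter_upwards with t
    fun_prop

end bessel

lemma pow_le_pow_mul_exp {y : ℝ} (hy : 0 ≤ y) (n : ℕ) : y ^ n ≤ (n:ℝ)^n * Real.exp y := by
  rcases Nat.eq_zero_or_pos n with rfl | hn
  · simpa using (Real.one_le_exp hy)
  have hn0 : (0:ℝ) < n := by positivity
  have h1 : y / n ≤ Real.exp (y / n) := (le_add_of_nonneg_right zero_le_one).trans
    (by linarith [Real.add_one_le_exp (y/n)])
  have h2 : (y/n)^n ≤ Real.exp (y/n) ^ n :=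
    pow_le_pow_left₀ (by positivity) h1 n
  rw [← Real.exp_nat_mul] at h2
  have h3 : (n:ℝ) * (y/n) = y := by field_simp
  rw [h3] at h2
  have h4 : (y/n)^n = y^n / (n:ℝ)^n := div_pow y _ n
  rw [h4] at h2
  calc y^n = (n:ℝ)^n * (y^n / (n:ℝ)^n) := by field_simp
  _ ≤ (n:ℝ)^n * Real.exp y := by
      apply mul_le_mul_of_nonneg_left h2 (by positivity)

section gfun

variable {d : ℕ} {m : ℝ}

/-- the radial integrand -/
noncomputable def gfun (d : ℕ) (m : ℝ) (u : ℝ) : ℝ :=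
  u ^ (((d:ℝ)-3)/2) * besselK (((d:ℝ)+1)/2) (m * u)

lemma nu_pos (hd : 1 ≤ d) : (1:ℝ) ≤ ((d:ℝ)+1)/2 := by
  have : (1:ℝ) ≤ (d:ℝ) := by exact_mod_cast hd
  linarith

lemma gfun_contOn (hm : 0 < m) : ContinuousOn (gfun d m) (Ioi (0:ℝ)) := by
  apply ContinuousOn.mul
  · intro u hu
    exact (Real.continuousAt_rpow_const u _ (Or.inl (ne_of_gt hu))).continuousWithinAt
  · apply (besselK_continuousOn (by positivity)).comp (continuous_const.mul continuous_id).continuousOn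
    intro u hu
    exact mul_pos hm hu

lemma gfun_pos (hd : 1 ≤ d) (hm : 0 < m) {u : ℝ} (hu : 0 < u) : 0 < gfun d m u :=
  mul_pos (Real.rpow_pos_of_pos hu _) (besselK_pos (by positivity) (mul_pos hm hu))

lemma gfun_nonpos (hd : 1 ≤ d) (hm : 0 < m) {u : ℝ} (hu : u ≤ 0) : gfun d m u = 0 := by
  rw [gfun, besselK_eq_zero (nu_pos hd) (by nlinarith), mul_zero]

lemma gfun_integrableOn (hd : 1 ≤ d) (hm : 0 < m) {s : ℝ} (hs : 0 < s) :
    IntegrableOn (gfun d m) (Ioi s) := by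
  set Ks := besselK (((d:ℝ)+1)/2) (m*s/2) with hKs
  have hKspos : 0 < Ks := besselK_pos (by positivity) (by positivity)
  set Cn : ℝ := ((4*(d:ℝ)/m))^d with hCn
  have hCn0 : 0 ≤ Cn := by positivity
  set D : ℝ := Ks * (s ^ (((d:ℝ)-3)/2) + 1 + Cn) with hD
  have hD0 : 0 ≤ D := by positivity
  apply Integrable.mono' ((exp_neg_integrableOn_Ioi s (by positivity : (0:ℝ) < m/4)).const_mul D)
  · exact ((gfun_contOn hm).mono (Ioi_subset_Ioi hs.le)).aestronglyMeasurable measurableSet_Ioi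
  · filter_upwards [ae_restrict_mem measurableSet_Ioi] with u hu
    have hus : s < u := hu
    have hu0 : 0 < u := hs.trans hus
    -- besselK bound
    have hK : besselK (((d:ℝ)+1)/2) (m*u) ≤ Real.exp (-(m*u)/2) * Ks := by
      have := besselK_le (x := m*u) (by positivity : (0:ℝ) ≤ ((d:ℝ)+1)/2)
        (by positivity : (0:ℝ) < m*s) (by nlinarith)
      calc besselK (((d:ℝ)+1)/2) (m*u) ≤ Real.exp (-(m*u)/2) * besselK (((d:ℝ)+1)/2) (m*s/2) := this
      _ = Real.exp (-(m*u)/2) * Ks := by rw [hKs]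
    -- rpow bound
    have hrpow : u ^ (((d:ℝ)-3)/2) ≤ s ^ (((d:ℝ)-3)/2) + 1 + u^d := by
      rcases le_or_gt u 1 with hu1 | hu1
      · rcases le_or_gt 0 (((d:ℝ)-3)/2) with ha | ha
        · have : u ^ (((d:ℝ)-3)/2) ≤ 1 := Real.rpow_le_one hu0.le hu1 ha
          nlinarith [Real.rpow_pos_of_pos hs (((d:ℝ)-3)/2), pow_pos hu0 d]
        · have : u ^ (((d:ℝ)-3)/2) ≤ s ^ (((d:ℝ)-3)/2) := by
            apply Real.rpow_le_rpow_of_nonpos hs hus.le ha.le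
          nlinarith [pow_pos hu0 d]
      · have h1 : u ^ (((d:ℝ)-3)/2) ≤ u ^ ((d:ℕ):ℝ) := by
          apply Real.rpow_le_rpow_of_exponent_le hu1.le
          have : (1:ℝ) ≤ (d:ℝ) := by exact_mod_cast hd
          linarith
        rw [Real.rpow_natCast] at h1
        nlinarith [Real.rpow_pos_of_pos hs (((d:ℝ)-3)/2)]
    -- u^d ≤ Cn * exp(m u /4)
    have hpow : u^d ≤ Cn * Real.exp (m*u/4) := by
      have h1 : (m*u/4)^d ≤ (d:ℝ)^d * Real.exp (m*u/4) := pow_le_pow_mul_exp (by positivity) d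
      have h2 : u^d = (m*u/4)^d * (4/m)^d := by
        rw [← mul_pow]; congr 1; field_simp
      rw [h2, hCn]
      calc (m*u/4)^d * (4/m)^d ≤ ((d:ℝ)^d * Real.exp (m*u/4)) * (4/m)^d := by
            apply mul_le_mul_of_nonneg_right h1 (by positivity)
      _ = (4*(d:ℝ)/m)^d * Real.exp (m*u/4) := by
            rw [show (4*(d:ℝ)/m) = (d:ℝ) * (4/m) by ring, mul_pow]; ring
    -- assemble
    rw [Real.norm_eq_abs, abs_of_nonneg (gfun_pos hd hm hu0).le]
    have h5 : gfun d m u ≤ (s ^ (((d:ℝ)-3)/2) + 1 + u^d) * (Real.exp (-(m*u)/2) * Ks) := by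
      rw [gfun]
      apply mul_le_mul hrpow hK (besselK_pos (by positivity) (by positivity)).le
      positivity
    have e1 : Real.exp (m*u/4) * Real.exp (-(m*u)/2) = Real.exp (-(m*u)/4) := by
      rw [← Real.exp_add]; congr 1; ring
    have e2 : Real.exp (-(m*u)/2) ≤ Real.exp (-(m*u)/4) := by
      apply Real.exp_le_exp.2; nlinarith
    have e3 : Real.exp (-(m/4)*u) = Real.exp (-(m*u)/4) := by congr 1; ring
    have t1 : u^d*Real.exp (-(m*u)/2) ≤ Cn*Real.exp (-(m*u)/4) := by
      calc u^d*Real.exp (-(m*u)/2) ≤ (Cn*Real.exp (m*u/4))*Real.exp (-(m*u)/2) :=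
            mul_le_mul_of_nonneg_right hpow (Real.exp_pos _).le
      _ = Cn*(Real.exp (m*u/4)*Real.exp (-(m*u)/2)) := by ring
      _ = Cn*Real.exp (-(m*u)/4) := by rw [e1]
    have t2 : (s ^ (((d:ℝ)-3)/2)+1)*Real.exp (-(m*u)/2) ≤ (s ^ (((d:ℝ)-3)/2)+1)*Real.exp (-(m*u)/4) := by
      apply mul_le_mul_of_nonneg_left e2
      positivity
    calc gfun d m u ≤ (s ^ (((d:ℝ)-3)/2) + 1 + u^d) * (Real.exp (-(m*u)/2) * Ks) := h5
    _ = ((s ^ (((d:ℝ)-3)/2)+1)*Real.exp (-(m*u)/2))*Ks + (u^d*Real.exp (-(m*u)/2))*Ks := by ring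
    _ ≤ ((s ^ (((d:ℝ)-3)/2)+1)*Real.exp (-(m*u)/4))*Ks + (Cn*Real.exp (-(m*u)/4))*Ks := by
        apply add_le_add
        · exact mul_le_mul_of_nonneg_right t2 hKspos.le
        · exact mul_le_mul_of_nonneg_right t1 hKspos.le
    _ = D * Real.exp (-(m/4)*u) := by rw [hD, e3]; ring

end gfun

section ell

variable {d : ℕ} {m : ℝ}

noncomputable def Jint (d : ℕ) (m s : ℝ) : ℝ := ∫ u in Ioi s, gfun d m u

lemma ellFn_eq (d : ℕ) (m r : ℝ) :
    ellFn d m r = 2 ^ (((d:ℝ)-1)/2) * Real.Gamma (((d:ℝ)+1)/2) /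
      (m ^ (((d:ℝ)+1)/2) * Jint d m r) := rfl

lemma C0_pos (d : ℕ) : 0 < 2 ^ (((d:ℝ)-1)/2) * Real.Gamma (((d:ℝ)+1)/2) := by
  apply mul_pos (Real.rpow_pos_of_pos two_pos _)
  apply Real.Gamma_pos_of_pos
  positivity

lemma Jint_pos (hd : 1 ≤ d) (hm : 0 < m) {s : ℝ} (hs : 0 < s) : 0 < Jint d m s := by
  rw [Jint, setIntegral_pos_iff_support_of_nonneg_ae]
  · have hsub : Ioi s ⊆ Function.support (gfun d m) := fun u hu =>
      (gfun_pos hd hm (hs.trans hu)).ne'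
    rw [inter_eq_right.2 hsub]
    simp
  · filter_upwards [ae_restrict_mem measurableSet_Ioi] with u hu
    exact (gfun_pos hd hm (hs.trans hu)).le
  · exact gfun_integrableOn hd hm hs

lemma Jint_split (hd : 1 ≤ d) (hm : 0 < m) {s t : ℝ} (hst : s < t)
    (hint : IntegrableOn (gfun d m) (Ioi s)) :
    Jint d m s = (∫ u in Ioc s t, gfun d m u) + Jint d m t := by
  rw [Jint, Jint, ← setIntegral_union (Ioc_disjoint_Ioi le_rfl) measurableSet_Ioi
    (hint.mono_set Ioc_subset_Ioi_self) (hint.mono_set (Ioi_subset_Ioi hst.le)),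
    Ioc_union_Ioi_eq_Ioi hst.le]

lemma Jint_strict_anti (hd : 1 ≤ d) (hm : 0 < m) {s t : ℝ} (hs : 0 ≤ s) (hst : s < t)
    (hint : IntegrableOn (gfun d m) (Ioi s)) :
    Jint d m t < Jint d m s := by
  rw [Jint_split hd hm hst hint]
  have hpos : 0 < ∫ u in Ioc s t, gfun d m u := by
    rw [setIntegral_pos_iff_support_of_nonneg_ae]
    · have hsub : Ioc s t ⊆ Function.support (gfun d m) := fun u hu =>
        (gfun_pos hd hm (hs.trans_lt hu.1)).ne'
      rw [inter_eq_right.2 hsub]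
      simp [hst]
    · filter_upwards [ae_restrict_mem measurableSet_Ioc] with u hu
      exact (gfun_pos hd hm (hs.trans_lt hu.1)).le
    · exact hint.mono_set Ioc_subset_Ioi_self
  linarith

lemma ellFn_pos (hd : 1 ≤ d) (hm : 0 < m) {s : ℝ} (hs : 0 < s) : 0 < ellFn d m s := by
  rw [ellFn_eq]
  apply div_pos (C0_pos d)
  exact mul_pos (Real.rpow_pos_of_pos hm _) (Jint_pos hd hm hs)

lemma ellFn_strictMonoOn (hd : 1 ≤ d) (hm : 0 < m) :
    StrictMonoOn (ellFn d m) (Ioi (0:ℝ)) := by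
  intro s hs t ht hst
  rw [ellFn_eq, ellFn_eq]
  have hJt : 0 < Jint d m t := Jint_pos hd hm ht
  have hJs : Jint d m t < Jint d m s :=
    Jint_strict_anti hd hm (le_of_lt hs) hst (gfun_integrableOn hd hm hs)
  apply div_lt_div_of_pos_left (C0_pos d)
  · exact mul_pos (Real.rpow_pos_of_pos hm _) hJt
  · exact mul_lt_mul_of_pos_left hJs (Real.rpow_pos_of_pos hm _)

lemma ellFn_nonpos (hd : 1 ≤ d) (hm : 0 < m) {r : ℝ} (hr : r ≤ 0) :
    ellFn d m r = ellFn d m 0 := by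
  rcases eq_or_lt_of_le hr with rfl | hr'
  · rfl
  have hJ : Jint d m r = Jint d m 0 := by
    by_cases hint : IntegrableOn (gfun d m) (Ioi (0:ℝ))
    · have hzero : IntegrableOn (gfun d m) (Ioc r 0) := by
        apply (integrableOn_congr_fun _ measurableSet_Ioc).2 (integrableOn_zero)
        intro u hu
        exact (gfun_nonpos hd hm hu.2)
      have : IntegrableOn (gfun d m) (Ioi r) := by
        rw [← Ioc_union_Ioi_eq_Ioi hr]
        exact hzero.union hint
      rw [Jint_split hd hm hr' this, Jint]
      have : (∫ u in Ioc r 0, gfun d m u) = 0 := by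
        rw [setIntegral_congr_fun measurableSet_Ioc (g := fun _ => (0:ℝ))
          (fun u hu => gfun_nonpos hd hm hu.2)]
        simp
      rw [this, zero_add]
    · have hint' : ¬ IntegrableOn (gfun d m) (Ioi r) := by
        intro h
        exact hint (h.mono_set (Ioi_subset_Ioi hr))
      rw [Jint, Jint, integral_undef hint', integral_undef hint]
  rw [ellFn_eq, ellFn_eq, hJ]

lemma linv_pos (hd : 1 ≤ d) (hm : 0 < m) {linv : ℝ → ℝ}
    (hinv : Set.InvOn linv (ellFn d m) (Set.Ioi (0:ℝ)) (Set.Ioi (0:ℝ))) :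
    ∀ y ∈ Ioi (0:ℝ), 0 < linv y := by
  intro y hy
  by_contra hcon
  push_neg at hcon
  have h1 : ellFn d m (linv y) = y := hinv.2 hy
  have h2 : ellFn d m 0 = y := by rw [← ellFn_nonpos hd hm hcon, h1]
  set y0 := ellFn d m 0 with hy0
  have hy0pos : 0 < y0 := h2 ▸ hy
  -- integrability at 0
  have hint : IntegrableOn (gfun d m) (Ioi (0:ℝ)) := by
    by_contra hint
    have : Jint d m 0 = 0 := integral_undef hint
    rw [hy0, ellFn_eq, this, mul_zero, div_zero] at hy0pos
    exact lt_irrefl _ hy0pos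
  have hJ0 : 0 < Jint d m 0 := by
    rcases lt_trichotomy (Jint d m 0) 0 with h | h | h
    · exfalso
      have : y0 < 0 := by
        rw [hy0, ellFn_eq]
        apply div_neg_of_pos_of_neg (C0_pos d)
        exact mul_neg_of_pos_of_neg (Real.rpow_pos_of_pos hm _) h
      linarith
    · exfalso
      rw [hy0, ellFn_eq, h, mul_zero, div_zero] at hy0pos
      exact lt_irrefl _ hy0pos
    · exact h
  have hgt : ∀ x ∈ Ioi (0:ℝ), y0 < ellFn d m x := by
    intro x hx
    have hJx : 0 < Jint d m x := Jint_pos hd hm hx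
    have hJlt : Jint d m x < Jint d m 0 := Jint_strict_anti hd hm le_rfl hx hint
    rw [hy0, ellFn_eq, ellFn_eq]
    apply div_lt_div_of_pos_left (C0_pos d)
    · exact mul_pos (Real.rpow_pos_of_pos hm _) hJx
    · exact mul_lt_mul_of_pos_left hJlt (Real.rpow_pos_of_pos hm _)
  -- contradiction with y' = y0/2
  have hy' : (0:ℝ) < y0/2 := by linarith
  have h3 : ellFn d m (linv (y0/2)) = y0/2 := hinv.2 hy'
  rcases le_or_gt (linv (y0/2)) 0 with h4 | h4
  · rw [ellFn_nonpos hd hm h4] at h3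
    rw [← hy0] at h3
    linarith
  · have := hgt _ h4
    rw [h3] at this
    linarith

lemma linv_strictMonoOn (hd : 1 ≤ d) (hm : 0 < m) {linv : ℝ → ℝ}
    (hinv : Set.InvOn linv (ellFn d m) (Set.Ioi (0:ℝ)) (Set.Ioi (0:ℝ))) :
    ∀ y₁ ∈ Ioi (0:ℝ), ∀ y₂ ∈ Ioi (0:ℝ), y₁ < y₂ → linv y₁ < linv y₂ := by
  intro y₁ h₁ y₂ h₂ hlt
  by_contra hcon
  push_neg at hcon
  have p₁ := linv_pos hd hm hinv y₁ h₁
  have p₂ := linv_pos hd hm hinv y₂ h₂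
  have := (ellFn_strictMonoOn hd hm).monotoneOn (mem_Ioi.2 p₂) (mem_Ioi.2 p₁) hcon
  rw [hinv.2 h₁, hinv.2 h₂] at this
  linarith

lemma linv_gt_iff (hd : 1 ≤ d) (hm : 0 < m) {linv : ℝ → ℝ}
    (hinv : Set.InvOn linv (ellFn d m) (Set.Ioi (0:ℝ)) (Set.Ioi (0:ℝ)))
    {a x : ℝ} (ha : 0 < a) (hx : 0 < x) :
    a < linv x ↔ ellFn d m a < x := by
  constructor
  · intro h
    have := (ellFn_strictMonoOn hd hm) (mem_Ioi.2 ha) (mem_Ioi.2 (linv_pos hd hm hinv x hx)) h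
    rwa [hinv.2 (mem_Ioi.2 hx)] at this
  · intro h
    have hEa : 0 < ellFn d m a := ellFn_pos hd hm ha
    have := linv_strictMonoOn hd hm hinv _ (mem_Ioi.2 hEa) _ (mem_Ioi.2 hx) h
    rwa [hinv.1 (mem_Ioi.2 ha)] at this

end ell

section oneD

variable {d : ℕ} {m : ℝ}

noncomputable def F0 (d : ℕ) (r : ℝ) : ℝ≥0∞ :=
  ENNReal.ofReal (Real.Gamma (((d:ℝ)+1)/2) / (π ^ (((d:ℝ)+1)/2) * r ^ ((d:ℝ)+1)))

noncomputable def Fm (d : ℕ) (m r : ℝ) : ℝ≥0∞ :=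
  ENNReal.ofReal (2 * (m / (2 * π)) ^ (((d:ℝ)+1)/2) *
      besselK (((d:ℝ)+1)/2) (m * r) / r ^ (((d:ℝ)+1)/2))

lemma F0_measurable (d : ℕ) : Measurable (F0 d) := by
  apply Measurable.ennreal_ofReal
  apply Measurable.div measurable_const
  exact measurable_const.mul (by measurability)

lemma Fm_contOn (hd : 1 ≤ d) (hm : 0 < m) : ContinuousOn (Fm d m) (Ioi (0:ℝ)) := by
  apply ENNReal.continuous_ofReal.comp_continuousOn
  apply ContinuousOn.div
  · apply ContinuousOn.mul continuousOn_const
    exact (besselK_continuousOn (by positivity)).comp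
      (continuous_const.mul continuous_id).continuousOn
      (fun u hu => mul_pos hm hu)
  · intro u hu
    exact (Real.continuousAt_rpow_const u _ (Or.inl (ne_of_gt hu))).continuousWithinAt
  · intro u hu
    exact (Real.rpow_pos_of_pos hu _).ne'

lemma Fm_measurable_sub (hd : 1 ≤ d) (hm : 0 < m) :
    Measurable (fun r : ↥(Ioi (0:ℝ)) => Fm d m ↑r) := by
  have : Continuous (fun r : ↥(Ioi (0:ℝ)) => Fm d m ↑r) :=
    ContinuousOn.restrict (Fm_contOn hd hm)
  exact this.measurable

/-- the generating π-system of tail sets on the subtype `(0, ∞)` -/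
def tailS : Set (Set ↥(Ioi (0:ℝ))) :=
  (fun a => (Subtype.val ⁻¹' (Ioi a) : Set ↥(Ioi (0:ℝ)))) '' (Ioi (0:ℝ))

lemma tailS_pi : IsPiSystem tailS := by
  rintro _ ⟨a, ha, rfl⟩ _ ⟨b, hb, rfl⟩ _
  refine ⟨max a b, mem_Ioi.2 (lt_max_of_lt_left ha), ?_⟩
  ext x
  simp [lt_max_iff, max_lt_iff, and_comm]

lemma gen_eq : (inferInstance : MeasurableSpace ↥(Ioi (0:ℝ))) =
    MeasurableSpace.generateFrom tailS := by
  apply le_antisymm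
  · have h1 : (inferInstance : MeasurableSpace ↥(Ioi (0:ℝ))) =
        MeasurableSpace.comap (Subtype.val) (borel ℝ) := by
      rw [← BorelSpace.measurable_eq (α := ℝ)]; rfl
    rw [h1, borel_eq_generateFrom_Ioi ℝ, MeasurableSpace.comap_generateFrom]
    apply MeasurableSpace.generateFrom_le
    rintro t ⟨u, ⟨a, rfl⟩, rfl⟩
    rcases le_or_gt a 0 with ha | ha
    · have huniv : (Subtype.val ⁻¹' (Ioi a) : Set ↥(Ioi (0:ℝ))) = univ := by
        ext x
        simpa using ha.trans_lt x.2
      rw [huniv]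
      exact MeasurableSet.univ
    · exact MeasurableSpace.measurableSet_generateFrom ⟨a, ha, rfl⟩
  · apply MeasurableSpace.generateFrom_le
    rintro t ⟨a, _, rfl⟩
    exact measurable_subtype_coe measurableSet_Ioi

lemma tail_formula (d : ℕ) (F : ℝ → ℝ≥0∞)
    (hF : Measurable (fun r : ↥(Ioi (0:ℝ)) => F ↑r)) {b : ℝ} (hb : 0 < b) :
    (Measure.volumeIoiPow (d-1)).withDensity (fun r => F ↑r)
      ((Subtype.val : ↥(Ioi (0:ℝ)) → ℝ) ⁻¹' (Ioi b)) =
    ∫⁻ r in Ioi b, ENNReal.ofReal (r ^ (d-1)) * F r ∂volume := by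
  have hmeas : MeasurableSet ((Subtype.val : ↥(Ioi (0:ℝ)) → ℝ) ⁻¹' (Ioi b)) :=
    measurable_subtype_coe measurableSet_Ioi
  rw [withDensity_apply _ hmeas, Measure.volumeIoiPow,
    setLIntegral_withDensity_eq_setLIntegral_mul _
      (by fun_prop : Measurable (fun r : ↥(Ioi (0:ℝ)) => ENNReal.ofReal (r.1 ^ (d-1))))
      (g := fun a : ↥(Ioi (0:ℝ)) => F ↑a) hF hmeas]
  have h2 := setLIntegral_subtype (μ := volume) (measurableSet_Ioi (a := (0:ℝ)))
      ((Subtype.val : ↥(Ioi (0:ℝ)) → ℝ) ⁻¹' (Ioi b))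
      (fun r => ENNReal.ofReal (r ^ (d-1)) * F r)
  simp only [Pi.mul_apply]
  rw [h2, Subtype.image_preimage_coe, inter_eq_right.2 (Ioi_subset_Ioi hb.le)]

end oneD

section oneD2

variable {d : ℕ} {m : ℝ}

lemma pow_sub_one_eq (hd : 1 ≤ d) {r : ℝ} (hr : 0 < r) :
    r ^ (d-1) = r ^ ((d:ℝ) - 1) := by
  rw [← Real.rpow_natCast r (d-1), Nat.cast_sub hd, Nat.cast_one]

lemma tail0_eval (hd : 1 ≤ d) {R : ℝ} (hR : 0 < R) :
    ∫⁻ r in Ioi R, ENNReal.ofReal (r ^ (d-1)) * F0 d r ∂volume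
    = ENNReal.ofReal ((Real.Gamma (((d:ℝ)+1)/2) / π ^ (((d:ℝ)+1)/2)) / R) := by
  set c : ℝ := Real.Gamma (((d:ℝ)+1)/2) / π ^ (((d:ℝ)+1)/2) with hc
  have hΓ : 0 < Real.Gamma (((d:ℝ)+1)/2) := Real.Gamma_pos_of_pos (by positivity)
  have hπν : (0:ℝ) < π ^ (((d:ℝ)+1)/2) := Real.rpow_pos_of_pos pi_pos _
  have hcpos : 0 < c := div_pos hΓ hπν
  have hcongr : ∀ r ∈ Ioi R, ENNReal.ofReal (r ^ (d-1)) * F0 d r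
      = ENNReal.ofReal (c * r ^ (-2:ℝ)) := by
    intro r hr
    have hr0 : 0 < r := hR.trans hr
    rw [F0, ← ENNReal.ofReal_mul (by positivity)]
    congr 1
    rw [pow_sub_one_eq hd hr0,
      show ((d:ℝ)-1) = (-2) + ((d:ℝ)+1) by ring, Real.rpow_add hr0]
    have hrd : (0:ℝ) < r ^ ((d:ℝ)+1) := Real.rpow_pos_of_pos hr0 _
    field_simp [hc]
    rw [hc]; field_simp
  rw [setLIntegral_congr_fun measurableSet_Ioi hcongr,
    ← ofReal_integral_eq_lintegral_ofReal]
  · congr 1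
    rw [integral_const_mul, integral_Ioi_rpow_of_lt (by norm_num) hR]
    norm_num
    rw [Real.rpow_neg_one]
    field_simp
  · exact (integrableOn_Ioi_rpow_of_lt (by norm_num) hR).const_mul c
  · filter_upwards [ae_restrict_mem measurableSet_Ioi] with r hr
    have : (0:ℝ) < r := hR.trans hr
    positivity

lemma tailm_eval (hd : 1 ≤ d) (hm : 0 < m) {s : ℝ} (hs : 0 < s) :
    ∫⁻ r in Ioi s, ENNReal.ofReal (r ^ (d-1)) * Fm d m r ∂volume
    = ENNReal.ofReal (2 * (m / (2 * π)) ^ (((d:ℝ)+1)/2) * Jint d m s) := by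
  set c : ℝ := 2 * (m / (2 * π)) ^ (((d:ℝ)+1)/2) with hc
  have hcpos : 0 < c := by
    apply mul_pos two_pos (Real.rpow_pos_of_pos (by positivity) _)
  have hcongr : ∀ r ∈ Ioi s, ENNReal.ofReal (r ^ (d-1)) * Fm d m r
      = ENNReal.ofReal (c * gfun d m r) := by
    intro r hr
    have hr0 : 0 < r := hs.trans hr
    rw [Fm, ← ENNReal.ofReal_mul (by positivity)]
    congr 1
    rw [gfun, pow_sub_one_eq hd hr0,
      show ((d:ℝ)-1) = ((d:ℝ)-3)/2 + ((d:ℝ)+1)/2 by ring, Real.rpow_add hr0]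
    have hrd : (0:ℝ) < r ^ (((d:ℝ)+1)/2) := Real.rpow_pos_of_pos hr0 _
    field_simp
    ring
  rw [setLIntegral_congr_fun measurableSet_Ioi hcongr,
    ← ofReal_integral_eq_lintegral_ofReal]
  · congr 1
    rw [integral_const_mul, Jint]
  · exact (gfun_integrableOn hd hm hs).const_mul c
  · filter_upwards [ae_restrict_mem measurableSet_Ioi] with r hr
    have hr0 : (0:ℝ) < r := hs.trans hr
    exact mul_nonneg hcpos.le (gfun_pos hd hm hr0).le

lemma const_match (hd : 1 ≤ d) (hm : 0 < m) {s : ℝ} (hs : 0 < s) :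
    (Real.Gamma (((d:ℝ)+1)/2) / π ^ (((d:ℝ)+1)/2)) / ellFn d m s
      = 2 * (m / (2 * π)) ^ (((d:ℝ)+1)/2) * Jint d m s := by
  have hJ := Jint_pos hd hm hs
  have hΓ : 0 < Real.Gamma (((d:ℝ)+1)/2) := Real.Gamma_pos_of_pos (by positivity)
  have hπν : (0:ℝ) < π ^ (((d:ℝ)+1)/2) := Real.rpow_pos_of_pos pi_pos _
  have hmν : (0:ℝ) < m ^ (((d:ℝ)+1)/2) := Real.rpow_pos_of_pos hm _
  have h2ν : (0:ℝ) < (2:ℝ) ^ (((d:ℝ)-1)/2) := Real.rpow_pos_of_pos two_pos _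
  have hsplit : (m/(2*π)) ^ (((d:ℝ)+1)/2)
      = m ^ (((d:ℝ)+1)/2) / ((2:ℝ) ^ (((d:ℝ)+1)/2) * π ^ (((d:ℝ)+1)/2)) := by
    rw [Real.div_rpow hm.le (by positivity), Real.mul_rpow (by norm_num) pi_pos.le]
  have h2exp : (2:ℝ) ^ (((d:ℝ)+1)/2) = 2 * (2:ℝ) ^ (((d:ℝ)-1)/2) := by
    rw [show ((d:ℝ)+1)/2 = 1 + ((d:ℝ)-1)/2 by ring, Real.rpow_add two_pos, Real.rpow_one]
  rw [ellFn_eq, hsplit, h2exp]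
  field_simp

end oneD2

section mapeq

variable {d : ℕ} {m : ℝ} {linv : ℝ → ℝ}

noncomputable def LinvFun (hd : 1 ≤ d) (hm : 0 < m)
    (hinv : Set.InvOn linv (ellFn d m) (Set.Ioi (0:ℝ)) (Set.Ioi (0:ℝ))) :
    ↥(Ioi (0:ℝ)) → ↥(Ioi (0:ℝ)) :=
  fun x => ⟨linv ↑x, linv_pos hd hm hinv _ x.2⟩

lemma Linv_preimage (hd : 1 ≤ d) (hm : 0 < m)
    (hinv : Set.InvOn linv (ellFn d m) (Set.Ioi (0:ℝ)) (Set.Ioi (0:ℝ)))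
    {a : ℝ} (ha : 0 < a) :
    (LinvFun hd hm hinv) ⁻¹' (Subtype.val ⁻¹' (Ioi a))
      = Subtype.val ⁻¹' (Ioi (ellFn d m a)) := by
  ext x
  simp only [LinvFun, mem_preimage, mem_Ioi]
  exact linv_gt_iff hd hm hinv ha x.2

lemma Linv_measurable (hd : 1 ≤ d) (hm : 0 < m)
    (hinv : Set.InvOn linv (ellFn d m) (Set.Ioi (0:ℝ)) (Set.Ioi (0:ℝ))) :
    Measurable (LinvFun hd hm hinv) := by
  have h : @Measurable _ _ _ (MeasurableSpace.generateFrom tailS) (LinvFun hd hm hinv) := by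
    apply measurable_generateFrom
    rintro t ⟨a, ha, rfl⟩
    rw [Linv_preimage hd hm hinv ha]
    exact measurable_subtype_coe measurableSet_Ioi
  rwa [← gen_eq] at h

lemma map_eq (hd : 1 ≤ d) (hm : 0 < m)
    (hinv : Set.InvOn linv (ellFn d m) (Set.Ioi (0:ℝ)) (Set.Ioi (0:ℝ))) :
    Measure.map (LinvFun hd hm hinv)
      ((Measure.volumeIoiPow (d-1)).withDensity (fun r => F0 d ↑r))
    = (Measure.volumeIoiPow (d-1)).withDensity (fun r => Fm d m ↑r) := by
  have hF0sub : Measurable (fun r : ↥(Ioi (0:ℝ)) => F0 d ↑r) :=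
    (F0_measurable d).comp measurable_subtype_coe
  have key1 : ∀ a : ℝ, 0 < a →
      Measure.map (LinvFun hd hm hinv)
        ((Measure.volumeIoiPow (d-1)).withDensity (fun r => F0 d ↑r))
        (Subtype.val ⁻¹' (Ioi a))
      = ENNReal.ofReal (2 * (m / (2*π)) ^ (((d:ℝ)+1)/2) * Jint d m a) := by
    intro a ha
    rw [Measure.map_apply (Linv_measurable hd hm hinv)
        (measurable_subtype_coe measurableSet_Ioi),
      Linv_preimage hd hm hinv ha,
      tail_formula d (F0 d) hF0sub (ellFn_pos hd hm ha),
      tail0_eval hd (ellFn_pos hd hm ha), const_match hd hm ha]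
  have key2 : ∀ a : ℝ, 0 < a →
      ((Measure.volumeIoiPow (d-1)).withDensity (fun r => Fm d m ↑r))
        (Subtype.val ⁻¹' (Ioi a))
      = ENNReal.ofReal (2 * (m / (2*π)) ^ (((d:ℝ)+1)/2) * Jint d m a) := by
    intro a ha
    rw [tail_formula d (Fm d m) (Fm_measurable_sub hd hm) ha, tailm_eval hd hm ha]
  apply Measure.ext_of_generateFrom_of_cover_subset gen_eq tailS_pi
    (T := range (fun n : ℕ => Subtype.val ⁻¹' (Ioi (1/((n:ℝ)+1)))))
  · rintro _ ⟨n, rfl⟩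
    exact ⟨1/((n:ℝ)+1), mem_Ioi.2 (by positivity), rfl⟩
  · exact countable_range _
  · apply sUnion_eq_univ_iff.2
    intro x
    obtain ⟨n, hn⟩ := exists_nat_one_div_lt (mem_Ioi.1 x.2)
    exact ⟨_, ⟨n, rfl⟩, hn⟩
  · rintro _ ⟨n, rfl⟩
    rw [key1 _ (by positivity)]
    exact ENNReal.ofReal_ne_top
  · rintro _ ⟨a, ha, rfl⟩
    rw [key1 _ ha, key2 _ ha]

end mapeq

section mainlemma

variable {d : ℕ} {m : ℝ} {linv : ℝ → ℝ}

noncomputable def lmFun (linv : ℝ → ℝ) : ℝ → ℝ :=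
  Function.extend (Subtype.val : ↥(Ioi (0:ℝ)) → ℝ) (fun x => linv ↑x) (fun _ => 0)

lemma lmFun_pos_eq {r : ℝ} (hr : 0 < r) : lmFun linv r = linv r := by
  have h : r = ((⟨r, hr⟩ : ↥(Ioi (0:ℝ))) : ℝ) := rfl
  rw [lmFun, h, Subtype.val_injective.extend_apply]

lemma lmFun_measurable (hd : 1 ≤ d) (hm : 0 < m)
    (hinv : Set.InvOn linv (ellFn d m) (Set.Ioi (0:ℝ)) (Set.Ioi (0:ℝ))) :
    Measurable (lmFun linv) := by
  apply (MeasurableEmbedding.subtype_coe measurableSet_Ioi).measurable_extend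
  · exact measurable_subtype_coe.comp (Linv_measurable hd hm hinv)
  · exact measurable_const

lemma key_lintegral (hd : 1 ≤ d) (hm : 0 < m)
    (hinv : Set.InvOn linv (ellFn d m) (Set.Ioi (0:ℝ)) (Set.Ioi (0:ℝ)))
    (G : EuclideanSpace ℝ (Fin d) → ℝ≥0∞) (hG : Measurable G) :
    ∫⁻ z, G ((lmFun linv ‖z‖ / ‖z‖) • z) * F0 d ‖z‖
        ∂(volume : Measure (EuclideanSpace ℝ (Fin d)))
    = ∫⁻ y, G y * Fm d m ‖y‖ ∂(volume : Measure (EuclideanSpace ℝ (Fin d))) := by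
  haveI : Nonempty (Fin d) := ⟨⟨0, hd⟩⟩
  have hdim : Module.finrank ℝ (EuclideanSpace ℝ (Fin d)) = d := finrank_euclideanSpace_fin
  set μ : Measure (EuclideanSpace ℝ (Fin d)) := volume with hμ
  set σ := μ.toSphere with hσ
  set τ := Measure.volumeIoiPow (d-1) with hτ
  have mp : MeasurePreserving (homeomorphUnitSphereProd (EuclideanSpace ℝ (Fin d))) (μ.comap Subtype.val) (σ.prod τ) := by
    have h := μ.measurePreserving_homeomorphUnitSphereProd
    rwa [hdim] at h
  have hlm : Measurable (lmFun linv) := lmFun_measurable hd hm hinv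
  have hF0sub : Measurable (fun r : ↥(Ioi (0:ℝ)) => F0 d ↑r) :=
    (F0_measurable d).comp measurable_subtype_coe
  have hFmsub : Measurable (fun r : ↥(Ioi (0:ℝ)) => Fm d m ↑r) := Fm_measurable_sub hd hm
  -- generic conversion to the product space
  have conv : ∀ (F : ℝ → ℝ≥0∞), Measurable (fun r : ↥(Ioi (0:ℝ)) => F ↑r) →
      ∀ (lf : ℝ → ℝ), Measurable lf →
      (∫⁻ z, G ((lf ‖z‖) • (‖z‖⁻¹ • z)) * F ‖z‖ ∂μ)
      = ∫⁻ θ, (∫⁻ r, G (lf (r:ℝ) • (((θ : Metric.sphere (0:EuclideanSpace ℝ (Fin d)) 1) : EuclideanSpace ℝ (Fin d)))) * F ↑r ∂τ) ∂σ := by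
    intro F hFsub lf hlf
    set Φprod : (Metric.sphere (0:EuclideanSpace ℝ (Fin d)) 1) × ↥(Ioi (0:ℝ)) → ℝ≥0∞ :=
      fun p => G (lf (p.2:ℝ) • ((p.1 : EuclideanSpace ℝ (Fin d)))) * F ↑p.2 with hΦprod
    have hmeas : Measurable Φprod := by
      apply Measurable.mul
      · apply hG.comp
        apply Measurable.fun_smul
        · exact (hlf.comp measurable_subtype_coe).comp measurable_snd
        · exact measurable_subtype_coe.comp measurable_fst
      · exact hFsub.comp measurable_snd
    calc ∫⁻ z, G ((lf ‖z‖) • (‖z‖⁻¹ • z)) * F ‖z‖ ∂μ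
        = ∫⁻ z in ({(0:EuclideanSpace ℝ (Fin d))}ᶜ : Set (EuclideanSpace ℝ (Fin d))), G ((lf ‖z‖) • (‖z‖⁻¹ • z)) * F ‖z‖ ∂μ := by
          rw [MeasureTheory.restrict_compl_singleton]
      _ = ∫⁻ x : ({(0:EuclideanSpace ℝ (Fin d))}ᶜ : Set (EuclideanSpace ℝ (Fin d))), G ((lf ‖(x:EuclideanSpace ℝ (Fin d))‖) • (‖(x:EuclideanSpace ℝ (Fin d))‖⁻¹ • (x:EuclideanSpace ℝ (Fin d)))) * F ‖(x:EuclideanSpace ℝ (Fin d))‖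
            ∂(μ.comap Subtype.val) :=
          (lintegral_subtype_comap (measurableSet_singleton (0:EuclideanSpace ℝ (Fin d))).compl _).symm
      _ = ∫⁻ x : ({(0:EuclideanSpace ℝ (Fin d))}ᶜ : Set (EuclideanSpace ℝ (Fin d))), Φprod (homeomorphUnitSphereProd (EuclideanSpace ℝ (Fin d)) x)
            ∂(μ.comap Subtype.val) := by
          apply lintegral_congr
          intro x
          rw [hΦprod]
          simp only [homeomorphUnitSphereProd_apply_fst_coe,
            homeomorphUnitSphereProd_apply_snd_coe]
      _ = ∫⁻ p, Φprod p ∂(σ.prod τ) :=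
          mp.lintegral_comp_emb (homeomorphUnitSphereProd (EuclideanSpace ℝ (Fin d))).measurableEmbedding Φprod
      _ = ∫⁻ θ, (∫⁻ r, Φprod (θ, r) ∂τ) ∂σ := lintegral_prod _ hmeas.aemeasurable
  -- apply the conversion to both sides
  have hL : ∫⁻ z, G ((lmFun linv ‖z‖ / ‖z‖) • z) * F0 d ‖z‖ ∂μ
      = ∫⁻ θ, (∫⁻ r, G (lmFun linv (r:ℝ) • (((θ : Metric.sphere (0:EuclideanSpace ℝ (Fin d)) 1) : EuclideanSpace ℝ (Fin d)))) * F0 d ↑r ∂τ) ∂σ := by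
    rw [← conv (F0 d) hF0sub (lmFun linv) hlm]
    apply lintegral_congr
    intro z
    rw [smul_smul, div_eq_mul_inv]
  have hR : ∫⁻ y, G y * Fm d m ‖y‖ ∂μ
      = ∫⁻ θ, (∫⁻ r, G ((r:ℝ) • (((θ : Metric.sphere (0:EuclideanSpace ℝ (Fin d)) 1) : EuclideanSpace ℝ (Fin d)))) * Fm d m ↑r ∂τ) ∂σ := by
    have e1 : ∫⁻ y, G y * Fm d m ‖y‖ ∂μ
        = ∫⁻ z, G (id ‖z‖ • (‖z‖⁻¹ • z)) * Fm d m ‖z‖ ∂μ := by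
      apply lintegral_congr
      intro z
      rcases eq_or_ne z 0 with rfl | hz
      · simp
      · rw [id_eq, smul_smul, mul_inv_cancel₀ (norm_ne_zero_iff.2 hz), one_smul]
    rw [e1, conv (Fm d m) hFmsub id measurable_id]
    apply lintegral_congr
    intro θ
    apply lintegral_congr
    intro r
    rw [id_eq]
  rw [hL, hR]
  -- inner integrals agree for every θ
  apply lintegral_congr
  intro θ
  set Gθ : ↥(Ioi (0:ℝ)) → ℝ≥0∞ := fun r => G ((r:ℝ) • (((θ : Metric.sphere (0:EuclideanSpace ℝ (Fin d)) 1) : EuclideanSpace ℝ (Fin d)))) with hGθ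
  have hGθm : Measurable Gθ := by
    apply hG.comp
    exact Measurable.smul measurable_subtype_coe measurable_const
  have hpt : ∀ r : ↥(Ioi (0:ℝ)), G (lmFun linv (r:ℝ) • (((θ : Metric.sphere (0:EuclideanSpace ℝ (Fin d)) 1) : EuclideanSpace ℝ (Fin d)))) * F0 d ↑r
      = (fun r : ↥(Ioi (0:ℝ)) => F0 d ↑r) r * (Gθ ∘ (LinvFun hd hm hinv)) r := by
    intro r
    rw [mul_comm]
    congr 2
    rw [lmFun_pos_eq r.2]
    rfl
  calc ∫⁻ r, G (lmFun linv (r:ℝ) • (((θ : Metric.sphere (0:EuclideanSpace ℝ (Fin d)) 1) : EuclideanSpace ℝ (Fin d)))) * F0 d ↑r ∂τ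
      = ∫⁻ r, ((fun r : ↥(Ioi (0:ℝ)) => F0 d ↑r) * (Gθ ∘ (LinvFun hd hm hinv))) r ∂τ :=
        lintegral_congr hpt
    _ = ∫⁻ r, (Gθ ∘ (LinvFun hd hm hinv)) r ∂(τ.withDensity (fun r => F0 d ↑r)) :=
        (lintegral_withDensity_eq_lintegral_mul τ hF0sub
          (hGθm.comp (Linv_measurable hd hm hinv))).symm
    _ = ∫⁻ x, Gθ x ∂(Measure.map (LinvFun hd hm hinv) (τ.withDensity (fun r => F0 d ↑r))) :=
        (lintegral_map hGθm (Linv_measurable hd hm hinv)).symm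
    _ = ∫⁻ x, Gθ x ∂(τ.withDensity (fun r => Fm d m ↑r)) := by
        rw [hτ, map_eq hd hm hinv]
    _ = ∫⁻ r, ((fun r : ↥(Ioi (0:ℝ)) => Fm d m ↑r) * Gθ) r ∂τ :=
        lintegral_withDensity_eq_lintegral_mul τ hFmsub hGθm
    _ = ∫⁻ r, G ((r:ℝ) • (((θ : Metric.sphere (0:EuclideanSpace ℝ (Fin d)) 1) : EuclideanSpace ℝ (Fin d)))) * Fm d m ↑r ∂τ := by
        apply lintegral_congr
        intro r
        rw [Pi.mul_apply, mul_comm]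

end mainlemma

/-- The map `φ_m(z) = ℓ_m^{−1}(|z|) z/|z|` pushes `n^0` forward to `n^m`. -/
theorem stmt16 (d : ℕ) (hd : 1 ≤ d) (m : ℝ) (hm : 0 < m) (linv : ℝ → ℝ)
    (hinv : Set.InvOn linv (ellFn d m) (Set.Ioi (0:ℝ)) (Set.Ioi (0:ℝ))) :
    Measure.map (fun z : EuclideanSpace ℝ (Fin d) => (linv ‖z‖ / ‖z‖) • z)
      (levyMeasureZero d) = levyMeasureM d m := by
  haveI : Nonempty (Fin d) := ⟨⟨0, hd⟩⟩
  have hlm : Measurable (lmFun linv) := lmFun_measurable hd hm hinv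
  have hfun : (fun z : EuclideanSpace ℝ (Fin d) => (linv ‖z‖ / ‖z‖) • z)
      = (fun z : EuclideanSpace ℝ (Fin d) => (lmFun linv ‖z‖ / ‖z‖) • z) := by
    funext z
    rcases eq_or_ne z 0 with rfl | hz
    · simp
    · rw [lmFun_pos_eq (norm_pos_iff.2 hz)]
  rw [hfun]
  have hψ : Measurable (fun z : EuclideanSpace ℝ (Fin d) => (lmFun linv ‖z‖ / ‖z‖) • z) := by
    apply Measurable.fun_smul
    · exact (hlm.comp measurable_norm).div measurable_norm
    · exact measurable_id
  ext s hs
  rw [Measure.map_apply hψ hs]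
  have h0 : levyMeasureZero d = volume.withDensity (fun z => F0 d ‖z‖) := rfl
  have h1 : levyMeasureM d m = volume.withDensity (fun y => Fm d m ‖y‖) := rfl
  rw [h0, h1, withDensity_apply _ (hψ hs), withDensity_apply _ hs]
  set G : EuclideanSpace ℝ (Fin d) → ℝ≥0∞ := s.indicator (fun _ => 1) with hG
  have hGm : Measurable G := measurable_const.indicator hs
  have key := key_lintegral hd hm hinv G hGm
  have e0 : ∫⁻ z in (fun z : EuclideanSpace ℝ (Fin d) => (lmFun linv ‖z‖ / ‖z‖) • z) ⁻¹' s,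
        F0 d ‖z‖ ∂volume
      = ∫⁻ z, G ((lmFun linv ‖z‖ / ‖z‖) • z) * F0 d ‖z‖ ∂volume := by
    rw [← lintegral_indicator (hψ hs)]
    apply lintegral_congr
    intro z
    by_cases h : (lmFun linv ‖z‖ / ‖z‖) • z ∈ s
    · simp [hG, h, mem_preimage]
    · simp [hG, h, mem_preimage]
  have e1 : ∫⁻ y in s, Fm d m ‖y‖ ∂volume = ∫⁻ y, G y * Fm d m ‖y‖ ∂volume := by
    rw [← lintegral_indicator hs]
    apply lintegral_congr
    intro y
    by_cases h : y ∈ s <;> simp [hG, h]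
  rw [e0, e1, key]
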